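/- arXiv:2204.10632 — 2 statements merged into one kernel-verified Lean document; each statement's English description precedes it below -/
import Mathlib

section
/- The two Hamiltonians H₁ = 2p₁p₂ + q₁p₂² − q₁⁴ − q₂² + 3q₁²q₂ + c·q₁ and H₂ = p₁² + (q₁²−q₂)p₂² + 2q₁p₁p₂ − q₁³q₂ + 2q₁q₂² + c·q₂ on ℝ⁴ with coordinates (q₁,q₂,p₁,p₂) Poisson-commute with respect to the canonical Poisson bracket {F,G} = Σᵢ (∂F/∂qᵢ · ∂G/∂pᵢ − ∂F/∂pᵢ · ∂G/∂qᵢ). -/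
noncomputable def pb (F G : ℝ → ℝ → ℝ → ℝ → ℝ) (q1 q2 p1 p2 : ℝ) : ℝ :=
    (deriv (fun t => F t q2 p1 p2) q1) * (deriv (fun t => G q1 q2 t p2) p1)
  + (deriv (fun t => F q1 t p1 p2) q2) * (deriv (fun t => G q1 q2 p1 t) p2)
  - (deriv (fun t => F q1 q2 t p2) p1) * (deriv (fun t => G t q2 p1 p2) q1)
  - (deriv (fun t => F q1 q2 p1 t) p2) * (deriv (fun t => G q1 t p1 p2) q2)

noncomputable def H1 (c : ℝ) (q1 q2 p1 p2 : ℝ) : ℝ :=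
  2*p1*p2 + q1*p2^2 - q1^4 - q2^2 + 3*q1^2*q2 + c*q1

noncomputable def H2 (c : ℝ) (q1 q2 p1 p2 : ℝ) : ℝ :=
  p1^2 + (q1^2 - q2)*p2^2 + 2*q1*p1*p2 - q1^3*q2 + 2*q1*q2^2 + c*q2

lemma dH1q1 (c q1 q2 p1 p2 : ℝ) :
    deriv (fun t => H1 c t q2 p1 p2) q1 = p2^2 - 4*q1^3 + 6*q1*q2 + c := by
  have h : HasDerivAt (fun t : ℝ => 2*p1*p2 + t*p2^2 - t^4 - q2^2 + 3*t^2*q2 + c*t)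
      (0 + 1*p2^2 - (4:ℕ)*q1^(4-1) - 0 + 3*((2:ℕ)*q1^(2-1))*q2 + c*1) q1 :=
    (((((hasDerivAt_const q1 (2*p1*p2)).add ((hasDerivAt_id' q1).mul_const (p2^2))).sub
      (hasDerivAt_pow 4 q1)).sub (hasDerivAt_const q1 (q2^2))).add
      (((hasDerivAt_pow 2 q1).const_mul 3).mul_const q2)).add ((hasDerivAt_id' q1).const_mul c)
  exact h.deriv.trans (by push_cast; ring)

lemma dH1q2 (c q1 q2 p1 p2 : ℝ) :
    deriv (fun t => H1 c q1 t p1 p2) q2 = 3*q1^2 - 2*q2 := by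
  have h : HasDerivAt (fun t : ℝ => 2*p1*p2 + q1*p2^2 - q1^4 - t^2 + 3*q1^2*t + c*q1)
      (0 - (2:ℕ)*q2^(2-1) + 3*q1^2*1 + 0) q2 :=
    (((hasDerivAt_const q2 (2*p1*p2 + q1*p2^2 - q1^4)).sub (hasDerivAt_pow 2 q2)).add
      ((hasDerivAt_id' q2).const_mul (3*q1^2))).add (hasDerivAt_const q2 (c*q1))
  exact h.deriv.trans (by push_cast; ring)

lemma dH1p1 (c q1 q2 p1 p2 : ℝ) :
    deriv (fun t => H1 c q1 q2 t p2) p1 = 2*p2 := by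
  have h : HasDerivAt (fun t : ℝ => 2*t*p2 + (q1*p2^2 - q1^4 - q2^2 + 3*q1^2*q2 + c*q1))
      (2*1*p2 + 0) p1 :=
    (((hasDerivAt_id' p1).const_mul 2).mul_const p2).add
      (hasDerivAt_const p1 (q1*p2^2 - q1^4 - q2^2 + 3*q1^2*q2 + c*q1))
  have e : (fun t : ℝ => H1 c q1 q2 t p2)
      = fun t : ℝ => 2*t*p2 + (q1*p2^2 - q1^4 - q2^2 + 3*q1^2*q2 + c*q1) := by
    funext t; simp only [H1]; ring
  rw [e, h.deriv]; ring

lemma dH1p2 (c q1 q2 p1 p2 : ℝ) :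
    deriv (fun t => H1 c q1 q2 p1 t) p2 = 2*p1 + 2*q1*p2 := by
  have h : HasDerivAt (fun t : ℝ => 2*p1*t + q1*t^2 + (- q1^4 - q2^2 + 3*q1^2*q2 + c*q1))
      (2*p1*1 + q1*((2:ℕ)*p2^(2-1)) + 0) p2 :=
    (((hasDerivAt_id' p2).const_mul (2*p1)).add ((hasDerivAt_pow 2 p2).const_mul q1)).add
      (hasDerivAt_const p2 (- q1^4 - q2^2 + 3*q1^2*q2 + c*q1))
  have e : (fun t : ℝ => H1 c q1 q2 p1 t)
      = fun t : ℝ => 2*p1*t + q1*t^2 + (- q1^4 - q2^2 + 3*q1^2*q2 + c*q1) := by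
    funext t; simp only [H1]; ring
  rw [e, h.deriv]; push_cast; ring

lemma dH2q1 (c q1 q2 p1 p2 : ℝ) :
    deriv (fun t => H2 c t q2 p1 p2) q1 = 2*q1*p2^2 + 2*p1*p2 - 3*q1^2*q2 + 2*q2^2 := by
  have h : HasDerivAt (fun t : ℝ => p1^2 + (t^2 - q2)*p2^2 + 2*t*(p1*p2) - t^3*q2 + t*(2*q2^2) + c*q2)
      (0 + ((2:ℕ)*q1^(2-1) - 0)*p2^2 + 2*1*(p1*p2) - (3:ℕ)*q1^(3-1)*q2 + 1*(2*q2^2) + 0) q1 :=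
    (((((hasDerivAt_const q1 (p1^2)).add
      (((hasDerivAt_pow 2 q1).sub (hasDerivAt_const q1 q2)).mul_const (p2^2))).add
      (((hasDerivAt_id' q1).const_mul 2).mul_const (p1*p2))).sub
      ((hasDerivAt_pow 3 q1).mul_const q2)).add
      ((hasDerivAt_id' q1).mul_const (2*q2^2))).add (hasDerivAt_const q1 (c*q2))
  have e : (fun t : ℝ => H2 c t q2 p1 p2)
      = fun t : ℝ => p1^2 + (t^2 - q2)*p2^2 + 2*t*(p1*p2) - t^3*q2 + t*(2*q2^2) + c*q2 := by
    funext t; simp only [H2]; ring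
  rw [e, h.deriv]; push_cast; ring

lemma dH2q2 (c q1 q2 p1 p2 : ℝ) :
    deriv (fun t => H2 c q1 t p1 p2) q2 = -p2^2 - q1^3 + 4*q1*q2 + c := by
  have h : HasDerivAt (fun t : ℝ => p1^2 + q1^2*p2^2 + 2*q1*p1*p2 - t*p2^2 - q1^3*t + 2*q1*t^2 + c*t)
      (0 - 1*p2^2 - q1^3*1 + 2*q1*((2:ℕ)*q2^(2-1)) + c*1) q2 :=
    ((((hasDerivAt_const q2 (p1^2 + q1^2*p2^2 + 2*q1*p1*p2)).sub
      ((hasDerivAt_id' q2).mul_const (p2^2))).sub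
      ((hasDerivAt_id' q2).const_mul (q1^3))).add
      ((hasDerivAt_pow 2 q2).const_mul (2*q1))).add ((hasDerivAt_id' q2).const_mul c)
  have e : (fun t : ℝ => H2 c q1 t p1 p2)
      = fun t : ℝ => p1^2 + q1^2*p2^2 + 2*q1*p1*p2 - t*p2^2 - q1^3*t + 2*q1*t^2 + c*t := by
    funext t; simp only [H2]; ring
  rw [e, h.deriv]; push_cast; ring

lemma dH2p1 (c q1 q2 p1 p2 : ℝ) :
    deriv (fun t => H2 c q1 q2 t p2) p1 = 2*p1 + 2*q1*p2 := by
  have h : HasDerivAt (fun t : ℝ => t^2 + 2*q1*p2*t + ((q1^2 - q2)*p2^2 - q1^3*q2 + 2*q1*q2^2 + c*q2))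
      ((2:ℕ)*p1^(2-1) + 2*q1*p2*1 + 0) p1 :=
    ((hasDerivAt_pow 2 p1).add ((hasDerivAt_id' p1).const_mul (2*q1*p2))).add
      (hasDerivAt_const p1 ((q1^2 - q2)*p2^2 - q1^3*q2 + 2*q1*q2^2 + c*q2))
  have e : (fun t : ℝ => H2 c q1 q2 t p2)
      = fun t : ℝ => t^2 + 2*q1*p2*t + ((q1^2 - q2)*p2^2 - q1^3*q2 + 2*q1*q2^2 + c*q2) := by
    funext t; simp only [H2]; ring
  rw [e, h.deriv]; push_cast; ring

lemma dH2p2 (c q1 q2 p1 p2 : ℝ) :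
    deriv (fun t => H2 c q1 q2 p1 t) p2 = 2*(q1^2 - q2)*p2 + 2*q1*p1 := by
  have h : HasDerivAt (fun t : ℝ => (q1^2 - q2)*t^2 + 2*q1*p1*t + (p1^2 - q1^3*q2 + 2*q1*q2^2 + c*q2))
      ((q1^2 - q2)*((2:ℕ)*p2^(2-1)) + 2*q1*p1*1 + 0) p2 :=
    (((hasDerivAt_pow 2 p2).const_mul (q1^2 - q2)).add
      ((hasDerivAt_id' p2).const_mul (2*q1*p1))).add
      (hasDerivAt_const p2 (p1^2 - q1^3*q2 + 2*q1*q2^2 + c*q2))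
  have e : (fun t : ℝ => H2 c q1 q2 p1 t)
      = fun t : ℝ => (q1^2 - q2)*t^2 + 2*q1*p1*t + (p1^2 - q1^3*q2 + 2*q1*q2^2 + c*q2) := by
    funext t; simp only [H2]; ring
  rw [e, h.deriv]; push_cast; ring

theorem stmt1 (c : ℝ) : ∀ q1 q2 p1 p2 : ℝ, pb (H1 c) (H2 c) q1 q2 p1 p2 = 0 := by
  intro q1 q2 p1 p2
  rw [pb, dH1q1, dH1q2, dH1p1, dH1p2, dH2q1, dH2q2, dH2p1, dH2p2]
  ring
end

section
/- In the n=2 case, with q₁ = −(λ₁+λ₂), q₂ = λ₁λ₂, p₁ = −(λ₁μ₁/(λ₁−λ₂) + λ₂μ₂/(λ₂−λ₁)), p₂ = −(μ₁/(λ₁−λ₂) + μ₂/(λ₂−λ₁)), the transformation (λ₁,λ₂,μ₁,μ₂) ↦ (q₁,q₂,p₁,p₂) is canonical: the canonical Poisson brackets are preserved, i.e., {q₁,p₁}=1, {q₂,p₂}=1, {q₁,p₂}=0, {q₂,p₁}=0, {q₁,q₂}=0, {p₁,p₂}=0, computed with the bracket Σᵢ ∂/∂λᵢ ∧ ∂/∂μᵢ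 on the open set λ₁≠λ₂. -/
/-- Canonical Poisson bracket on ℝ⁴ with coordinates (λ₁,λ₂,μ₁,μ₂):
{F,G} = Σᵢ ∂F/∂λᵢ·∂G/∂μᵢ − ∂F/∂μᵢ·∂G/∂λᵢ. -/
noncomputable def pbl (F G : ℝ → ℝ → ℝ → ℝ → ℝ) (l1 l2 m1 m2 : ℝ) : ℝ :=
    (deriv (fun t => F t l2 m1 m2) l1) * (deriv (fun t => G l1 l2 t m2) m1)
  + (deriv (fun t => F l1 t m1 m2) l2) * (deriv (fun t => G l1 l2 m1 t) m2)
  - (deriv (fun t => F l1 l2 t m2) m1) * (deriv (fun t => G t l2 m1 m2) l1)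
  - (deriv (fun t => F l1 l2 m1 t) m2) * (deriv (fun t => G l1 t m1 m2) l2)

noncomputable def q1 (l1 l2 _m1 _m2 : ℝ) : ℝ := -(l1 + l2)
noncomputable def q2 (l1 l2 _m1 _m2 : ℝ) : ℝ := l1 * l2
noncomputable def p1 (l1 l2 m1 m2 : ℝ) : ℝ :=
  -(l1 * m1 / (l1 - l2) + l2 * m2 / (l2 - l1))
noncomputable def p2 (l1 l2 m1 m2 : ℝ) : ℝ :=
  -(m1 / (l1 - l2) + m2 / (l2 - l1))

theorem stmt11 (l1 l2 m1 m2 : ℝ) (h : l1 ≠ l2) :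
    pbl q1 p1 l1 l2 m1 m2 = 1 ∧
    pbl q2 p2 l1 l2 m1 m2 = 1 ∧
    pbl q1 p2 l1 l2 m1 m2 = 0 ∧
    pbl q2 p1 l1 l2 m1 m2 = 0 ∧
    pbl q1 q2 l1 l2 m1 m2 = 0 ∧
    pbl p1 p2 l1 l2 m1 m2 = 0 := by
  have hd1 : l1 - l2 ≠ 0 := sub_ne_zero.mpr h
  have hd2 : l2 - l1 ≠ 0 := sub_ne_zero.mpr (Ne.symm h)
  -- q derivatives
  have dq1l1 : deriv (fun t => q1 t l2 m1 m2) l1 = -1 := by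
    simp [q1]
  have dq1l2 : deriv (fun t => q1 l1 t m1 m2) l2 = -1 := by
    simp [q1]
  have dq2l1 : deriv (fun t => q2 t l2 m1 m2) l1 = l2 := by
    simp [q2]
  have dq2l2 : deriv (fun t => q2 l1 t m1 m2) l2 = l1 := by
    rw [show (fun t => q2 l1 t m1 m2) = fun t => l1 * t from rfl]
    simpa using ((hasDerivAt_id l2).const_mul l1).deriv
  have dq1m1 : deriv (fun t => q1 l1 l2 t m2) m1 = 0 := by simp [q1]
  have dq1m2 : deriv (fun t => q1 l1 l2 m1 t) m2 = 0 := by simp [q1]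
  have dq2m1 : deriv (fun t => q2 l1 l2 t m2) m1 = 0 := by simp [q2]
  have dq2m2 : deriv (fun t => q2 l1 l2 m1 t) m2 = 0 := by simp [q2]
  -- p1 derivatives
  have hp1l1 : HasDerivAt (fun t => p1 t l2 m1 m2)
      (-((m1 * (l1 - l2) - l1 * m1 * 1) / (l1 - l2) ^ 2
        + (0 * (l2 - l1) - l2 * m2 * (0 - 1)) / (l2 - l1) ^ 2)) l1 := by
    have h1 : HasDerivAt (fun t : ℝ => t * m1 / (t - l2))
        ((m1 * (l1 - l2) - l1 * m1 * 1) / (l1 - l2) ^ 2) l1 := by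
      simpa using ((hasDerivAt_id l1).mul_const m1).fun_div ((hasDerivAt_id l1).sub_const l2) hd1
    have h2 : HasDerivAt (fun t : ℝ => l2 * m2 / (l2 - t))
        ((0 * (l2 - l1) - l2 * m2 * (0 - 1)) / (l2 - l1) ^ 2) l1 :=
      (hasDerivAt_const l1 (l2 * m2)).div
        ((hasDerivAt_const l1 l2).sub (hasDerivAt_id l1)) hd2
    exact (h1.add h2).neg
  have hp1l2 : HasDerivAt (fun t => p1 l1 t m1 m2)
      (-((0 * (l1 - l2) - l1 * m1 * (0 - 1)) / (l1 - l2) ^ 2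
        + (m2 * (l2 - l1) - l2 * m2 * 1) / (l2 - l1) ^ 2)) l2 := by
    have h1 : HasDerivAt (fun t : ℝ => l1 * m1 / (l1 - t))
        ((0 * (l1 - l2) - l1 * m1 * (0 - 1)) / (l1 - l2) ^ 2) l2 :=
      (hasDerivAt_const l2 (l1 * m1)).div
        ((hasDerivAt_const l2 l1).sub (hasDerivAt_id l2)) hd1
    have h2 : HasDerivAt (fun t : ℝ => t * m2 / (t - l1))
        ((m2 * (l2 - l1) - l2 * m2 * 1) / (l2 - l1) ^ 2) l2 := by
      simpa using ((hasDerivAt_id l2).mul_const m2).fun_div ((hasDerivAt_id l2).sub_const l1) hd2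
    exact (h1.add h2).neg
  have dp1m1 : deriv (fun t => p1 l1 l2 t m2) m1 = -(l1 / (l1 - l2)) := by
    have h1 : HasDerivAt (fun t : ℝ => -(l1 * t / (l1 - l2) + l2 * m2 / (l2 - l1)))
        (-(l1 / (l1 - l2) + 0)) m1 := by
      have := (((hasDerivAt_id m1).const_mul l1).div_const (l1 - l2)).add_const
        (l2 * m2 / (l2 - l1))
      simpa using this.fun_neg
    simpa [p1] using h1.deriv
  have dp1m2 : deriv (fun t => p1 l1 l2 m1 t) m2 = -(l2 / (l2 - l1)) := by
    have h1 : HasDerivAt (fun t : ℝ => -(l1 * m1 / (l1 - l2) + l2 * t / (l2 - l1)))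
        (-(0 + l2 / (l2 - l1))) m2 := by
      have := (((hasDerivAt_id m2).const_mul l2).div_const (l2 - l1)).const_add
        (l1 * m1 / (l1 - l2))
      simpa using this.fun_neg
    simpa [p1] using h1.deriv
  -- p2 derivatives
  have hp2l1 : HasDerivAt (fun t => p2 t l2 m1 m2)
      (-((0 * (l1 - l2) - m1 * 1) / (l1 - l2) ^ 2
        + (0 * (l2 - l1) - m2 * (0 - 1)) / (l2 - l1) ^ 2)) l1 := by
    have h1 : HasDerivAt (fun t : ℝ => m1 / (t - l2))
        ((0 * (l1 - l2) - m1 * 1) / (l1 - l2) ^ 2) l1 :=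
      (hasDerivAt_const l1 m1).div ((hasDerivAt_id l1).sub_const l2) hd1
    have h2 : HasDerivAt (fun t : ℝ => m2 / (l2 - t))
        ((0 * (l2 - l1) - m2 * (0 - 1)) / (l2 - l1) ^ 2) l1 :=
      (hasDerivAt_const l1 m2).div
        ((hasDerivAt_const l1 l2).sub (hasDerivAt_id l1)) hd2
    exact (h1.add h2).neg
  have hp2l2 : HasDerivAt (fun t => p2 l1 t m1 m2)
      (-((0 * (l1 - l2) - m1 * (0 - 1)) / (l1 - l2) ^ 2
        + (0 * (l2 - l1) - m2 * 1) / (l2 - l1) ^ 2)) l2 := by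
    have h1 : HasDerivAt (fun t : ℝ => m1 / (l1 - t))
        ((0 * (l1 - l2) - m1 * (0 - 1)) / (l1 - l2) ^ 2) l2 :=
      (hasDerivAt_const l2 m1).div
        ((hasDerivAt_const l2 l1).sub (hasDerivAt_id l2)) hd1
    have h2 : HasDerivAt (fun t : ℝ => m2 / (t - l1))
        ((0 * (l2 - l1) - m2 * 1) / (l2 - l1) ^ 2) l2 :=
      (hasDerivAt_const l2 m2).div ((hasDerivAt_id l2).sub_const l1) hd2
    exact (h1.add h2).neg
  have dp2m1 : deriv (fun t => p2 l1 l2 t m2) m1 = -(1 / (l1 - l2)) := by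
    have h1 : HasDerivAt (fun t : ℝ => -(t / (l1 - l2) + m2 / (l2 - l1)))
        (-(1 / (l1 - l2) + 0)) m1 := by
      have := ((hasDerivAt_id m1).div_const (l1 - l2)).add_const (m2 / (l2 - l1))
      simpa using this.fun_neg
    simpa [p2] using h1.deriv
  have dp2m2 : deriv (fun t => p2 l1 l2 m1 t) m2 = -(1 / (l2 - l1)) := by
    have h1 : HasDerivAt (fun t : ℝ => -(m1 / (l1 - l2) + t / (l2 - l1)))
        (-(0 + 1 / (l2 - l1))) m2 := by
      have := ((hasDerivAt_id m2).div_const (l2 - l1)).const_add (m1 / (l1 - l2))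
      simpa using this.fun_neg
    simpa [p2] using h1.deriv
  have dp1l1 := hp1l1.deriv
  have dp1l2 := hp1l2.deriv
  have dp2l1 := hp2l1.deriv
  have dp2l2 := hp2l2.deriv
  refine ⟨?_, ?_, ?_, ?_, ?_, ?_⟩ <;>
    simp only [pbl, dq1l1, dq1l2, dq2l1, dq2l2, dq1m1, dq1m2, dq2m1, dq2m2,
      dp1m1, dp1m2, dp2m1, dp2m2, dp1l1, dp1l2, dp2l1, dp2l2] <;>
    field_simp <;> ring
end
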